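/- arXiv:1312.6791 — 6 statements merged into one kernel-verified Lean document; each statement's English description precedes it below -/
import Mathlib

section
/- Let G be a group, f : G → G a group endomorphism, and a ∈ G a fixed element. Define the binary operation x * y = f(x)⁻¹ · a · f(y) · x on G. Then (G, *) is an LD-system (i.e. x * (y * z) = (x * y) * (x * z) for all x, y, z ∈ G) if and only if a commutes with f(f(x)) for all x ∈ G and a satisfies the braid-type relation a · f(a) · a = f(a) · a · f(a). -/
/-- Generalized shifted conjugacy: `x * y = f(x)⁻¹ a f(y) x` is an LD-operation
on a group `G` iff `a` commutes with every `f(f(x))` and `a f(a) a = f(a) a f(a)`. -/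
theorem shifted_conjugacy_LD_iff {G : Type*} [Group G] (f : G →* G) (a : G) :
    (∀ x y z : G,
      (f x)⁻¹ * a * f ((f y)⁻¹ * a * f z * y) * x =
      (f ((f x)⁻¹ * a * f y * x))⁻¹ * a * f ((f x)⁻¹ * a * f z * x) *
        ((f x)⁻¹ * a * f y * x)) ↔
    ((∀ x : G, a * f (f x) = f (f x) * a) ∧ a * f a * a = f a * a * f a) := by
  constructor
  · intro h
    have h1 : a * f a = (f a)⁻¹ * (a * (f a * a)) := by
      have := h 1 1 1
      simpa only [map_mul, map_inv, map_one, one_mul, mul_one, inv_one, mul_inv_rev,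
        inv_inv, mul_assoc] using this
    have hb : a * f a * a = f a * a * f a := by
      have h1' : f a * (a * f a) = f a * ((f a)⁻¹ * (a * (f a * a))) := by rw [h1]
      rw [mul_inv_cancel_left] at h1'
      have h1'' : f a * (a * f a) = a * f a * a := by rw [h1']; group
      rw [← h1'']
      group
    refine ⟨fun x => ?_, hb⟩
    have h2 : a * (f a * x) = (f a)⁻¹ * (f (f x) * (a * ((f (f x))⁻¹ * (f a * (a * x))))) := by
      have := h x 1 1
      simp only [map_mul, map_inv, map_one, one_mul, mul_one, inv_one, mul_inv_rev,
        inv_inv, mul_assoc, mul_inv_cancel_left, inv_mul_cancel_left] at this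
      exact mul_left_cancel this
    have h1x : a * (f a * x) = (f a)⁻¹ * (a * (f a * (a * x))) := by
      have := congrArg (· * x) h1
      simpa only [mul_assoc] using this
    have h3 : f (f x) * (a * ((f (f x))⁻¹ * (f a * (a * x)))) = a * (f a * (a * x)) := by
      have := h1x.symm.trans h2
      exact (mul_left_cancel this).symm
    have h4 : f (f x) * a * (f (f x))⁻¹ * (f a * (a * x)) = a * (f a * (a * x)) := by
      rw [← h3]; group
    have h5 : f (f x) * a * (f (f x))⁻¹ = a := mul_right_cancel h4
    calc a * f (f x) = f (f x) * a * (f (f x))⁻¹ * f (f x) := by rw [h5]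
      _ = f (f x) * a := by group
  · rintro ⟨hc, hb⟩ x y z
    have hc1 : ∀ (g w : G), f (f g) * (a * w) = a * (f (f g) * w) := by
      intro g w; rw [← mul_assoc, ← hc, mul_assoc]
    have hc2 : ∀ (g w : G), (f (f g))⁻¹ * (a * w) = a * ((f (f g))⁻¹ * w) := by
      intro g w
      have : a * (f (f g))⁻¹ = (f (f g))⁻¹ * a :=
        (Commute.inv_right (show Commute a (f (f g)) from hc g)).eq
      rw [← mul_assoc, ← this, mul_assoc]
    have hb2 : ∀ w : G, (f a)⁻¹ * (a * (f a * (a * w))) = a * (f a * w) := by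
      intro w
      have : (f a)⁻¹ * (a * (f a * a)) = a * f a := by
        calc (f a)⁻¹ * (a * (f a * a)) = (f a)⁻¹ * (a * f a * a) := by group
          _ = (f a)⁻¹ * (f a * a * f a) := by rw [hb]
          _ = a * f a := by group
      calc (f a)⁻¹ * (a * (f a * (a * w))) = (f a)⁻¹ * (a * (f a * a)) * w := by group
        _ = a * f a * w := by rw [this]
        _ = a * (f a * w) := by group
    simp only [map_mul, map_inv, mul_inv_rev, inv_inv, mul_assoc, hc1, hc2, hb2,
      mul_inv_cancel_left, inv_mul_cancel_left]
end

section
/- Let G be a group and f : G → G a group endomorphism that is also a projector, i.e. f ∘ f = f. Define the binary operations x ∘_f y = f(x · y⁻¹) · x and x ∘_f^rev y = x · f(y⁻¹ · x) on G. Then both (G, ∘_f) and (G, ∘_f^rev) are LD-systems, i.e. each operation satisfies the left self-distributivity law. -/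
/-- For a projector endomorphism `f` of a group `G`, both
`x ∘_f y = f(x y⁻¹) x` and `x ∘_f^rev y = x f(y⁻¹ x)` are LD-operations. -/
theorem f_symmetric_conjugacy_LD {G : Type*} [Group G] (f : G →* G)
    (hf : f.comp f = f) :
    (∀ x y z : G,
      f (x * (f (y * z⁻¹) * y)⁻¹) * x =
      f ((f (x * y⁻¹) * x) * (f (x * z⁻¹) * x)⁻¹) * (f (x * y⁻¹) * x)) ∧
    (∀ x y z : G,
      x * f ((y * f (z⁻¹ * y))⁻¹ * x) =
      (x * f (y⁻¹ * x)) * f ((x * f (z⁻¹ * x))⁻¹ * (x * f (y⁻¹ * x)))) := by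
  have h : ∀ a : G, f (f a) = f a := fun a => by
    rw [← MonoidHom.comp_apply, hf]
  constructor <;> intro x y z <;>
    simp only [map_mul, map_inv, h, mul_inv_rev, inv_inv] <;> group
end

section
/- Let G be a group and f, g, h : G → G arbitrary group endomorphisms. Define on G the operations x ∘ y = x · y⁻¹ · x, x *_{f,g,h} y = f(x⁻¹) · g(y) · h(x), and x ∘_{f,g,h} y = f(x) · g(y⁻¹) · h(x). Then both *_{f,g,h} and ∘_{f,g,h} are left distributive over ∘, i.e. for all x, y, z ∈ G: x *_{f,g,h} (y ∘ z) = (x *_{f,g,h} y) ∘ (x *_{f,g,h} z) and x ∘_{f,g,h} (y ∘ z) = (x ∘_{f,g,h} y) ∘ (x ∘_{f,g,h} z). In particular (taking f = g = h = id in the first operation), the conjugacy operation x * y = x⁻¹ y x is left distributive over ∘. -/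
/-- Both `x *_{f,g,h} y = f(x⁻¹) g(y) h(x)` and `x ∘_{f,g,h} y = f(x) g(y⁻¹) h(x)`
are left distributive over symmetric conjugacy `x ∘ y = x y⁻¹ x`; in particular
conjugacy `x * y = x⁻¹ y x` is left distributive over `∘`. -/
theorem distributive_over_symmetric_conjugacy {G : Type*} [Group G]
    (f g h : G →* G) :
    (∀ x y z : G,
      f x⁻¹ * g (y * z⁻¹ * y) * h x =
      (f x⁻¹ * g y * h x) * (f x⁻¹ * g z * h x)⁻¹ * (f x⁻¹ * g y * h x)) ∧
    (∀ x y z : G,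
      f x * g (y * z⁻¹ * y)⁻¹ * h x =
      (f x * g y⁻¹ * h x) * (f x * g z⁻¹ * h x)⁻¹ * (f x * g y⁻¹ * h x)) ∧
    (∀ x y z : G,
      x⁻¹ * (y * z⁻¹ * y) * x =
      (x⁻¹ * y * x) * (x⁻¹ * z * x)⁻¹ * (x⁻¹ * y * x)) := by
  refine ⟨fun x y z => ?_, fun x y z => ?_, fun x y z => ?_⟩ <;>
    simp [map_mul, map_inv, mul_assoc]
end

section
/- Let G be a group and f : G → G a group endomorphism with f ∘ f = f. Define the binary operation x ∘_f y = f(x · y⁻¹) · x on G. Then for k ≥ 1 and b₁, …, b_k, s ∈ G, the iterated product b_k ∘_f (b_{k−1} ∘_f ( ⋯ ∘_f (b₂ ∘_f (b₁ ∘_f s)) ⋯ )) equals f(b_k · b_{k−1}⁻¹ · b_{k−2} ⋯ b₃ · b₂⁻¹ · b₁) · f(s⁻¹) · f(b₁ · b₂⁻¹ · b₃ ⋯ b_{k−1}⁻¹) · b_k when k is odd, and equals f(b_k · b_{k−1}⁻¹ ⋯ b₃⁻¹ · b₂ · b₁⁻¹) · f(s) · f(b₁⁻¹ · b₂ · b₃⁻¹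 ⋯ b_{k−1}⁻¹) · b_k when k is even (the signs of the exponents of b₁, …, b_{k−1} alternating in each product). -/
lemma rev_prod_inv {G : Type*} [Group G] (g : ℕ → G) (m : ℕ) :
    (((List.range m).reverse.map g).prod)⁻¹ =
      ((List.range m).map (fun i => (g i)⁻¹)).prod := by
  rw [List.prod_inv_reverse]
  simp [List.map_map]
  rfl

lemma peel_top {G : Type*} [Group G] (g : ℕ → G) (m : ℕ) :
    ((List.range (m+1)).reverse.map g).prod =
      g m * ((List.range m).reverse.map g).prod := by
  simp [List.range_succ]

lemma foldl_step {G : Type*} (F : G → ℕ → G) (s : G) (n : ℕ) :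
    (List.range (n+1)).foldl F s = F ((List.range n).foldl F s) n := by
  simp [List.range_succ]

/-- Explicit form of iterated `f`-symmetric conjugacy
`b_k ∘_f ( ⋯ ∘_f (b₁ ∘_f s) ⋯ )` where `x ∘_f y = f(x y⁻¹) x` and `f` is a
projector endomorphism: the signs of the exponents of `b₁, …, b_{k−1}`
alternate, and the middle term is `f(s⁻¹)` for odd `k` and `f(s)` for even `k`. -/
theorem iterated_f_symmetric_conjugacy_formula {G : Type*} [Group G]
    (f : G →* G) (hf : f.comp f = f) (k : ℕ) (hk : 1 ≤ k) (b : ℕ → G) (s : G) :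
    (Odd k →
      (List.range k).foldl (fun acc i => f (b (i + 1) * acc⁻¹) * b (i + 1)) s =
      f (((List.range k).reverse.map (fun i => b (i + 1) ^ ((-1 : ℤ) ^ i))).prod) *
        f s⁻¹ *
        f (((List.range (k - 1)).map (fun i => b (i + 1) ^ ((-1 : ℤ) ^ i))).prod) *
        b k) ∧
    (Even k →
      (List.range k).foldl (fun acc i => f (b (i + 1) * acc⁻¹) * b (i + 1)) s =
      f (((List.range k).reverse.map
            (fun i => b (i + 1) ^ ((-1 : ℤ) ^ (i + 1)))).prod) *
        f s *
        f (((List.range (k - 1)).map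
            (fun i => b (i + 1) ^ ((-1 : ℤ) ^ (i + 1)))).prod) *
        b k) := by
  have hff : ∀ x : G, f (f x) = f x := fun x => DFunLike.congr_fun hf x
  have hneg : ∀ i : ℕ, (b (i+1) ^ ((-1:ℤ)^(i+1)))⁻¹ = b (i+1) ^ ((-1:ℤ)^i) := by
    intro i; rw [← zpow_neg]; congr 1; rw [pow_succ]; ring
  have hneg' : ∀ i : ℕ, (b (i+1) ^ ((-1:ℤ)^i))⁻¹ = b (i+1) ^ ((-1:ℤ)^(i+1)) := by
    intro i; rw [← zpow_neg]; congr 1; rw [pow_succ]; ring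
  induction k with
  | zero => exact absurd hk (by norm_num)
  | succ n ih =>
    rcases Nat.eq_zero_or_pos n with h0 | h1
    · subst h0
      refine ⟨fun _ => ?_, fun h => absurd h (by decide)⟩
      simp [List.range_succ, map_mul, map_inv, mul_assoc]
    · obtain ⟨ihO, ihE⟩ := ih h1
      obtain ⟨m, rfl⟩ : ∃ m, n = m + 1 := ⟨n - 1, by omega⟩
      simp only [Nat.add_sub_cancel] at *
      constructor
      · -- Odd (m+2) case : m+1 is even, m is odd
        intro hodd
        have hEn : Even (m+1) := by obtain ⟨t, ht⟩ := hodd; exact ⟨t, by omega⟩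
        have hm : Odd m := by obtain ⟨t, ht⟩ := hEn; exact ⟨t-1, by omega⟩
        rw [foldl_step, ihE hEn]
        have h1 : ((List.range m).reverse.map
            (fun i => b (i+1) ^ ((-1:ℤ)^i))).prod =
            (((List.range m).map (fun i => b (i+1) ^ ((-1:ℤ)^(i+1)))).prod)⁻¹ := by
          apply inv_injective
          rw [inv_inv, rev_prod_inv]
          simp [hneg']
        have h2 : ((List.range (m+1)).map
            (fun i => b (i+1) ^ ((-1:ℤ)^i))).prod =
            (((List.range (m+1)).reverse.map
              (fun i => b (i+1) ^ ((-1:ℤ)^(i+1)))).prod)⁻¹ := by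
          rw [rev_prod_inv]
          simp [hneg]
        rw [peel_top (fun i => b (i+1) ^ ((-1:ℤ)^i)) (m+1),
          peel_top (fun i => b (i+1) ^ ((-1:ℤ)^i)) m]
        rw [hEn.neg_one_pow, hm.neg_one_pow, zpow_one, zpow_neg_one, h1, h2]
        simp [map_mul, map_inv, hff, mul_assoc]
      · -- Even (m+2) case : m+1 is odd, m is even
        intro heven
        have hOn : Odd (m+1) := by obtain ⟨t, ht⟩ := heven; exact ⟨t-1, by omega⟩
        have hm : Even m := by obtain ⟨t, ht⟩ := hOn; exact ⟨t, by omega⟩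
        rw [foldl_step, ihO hOn]
        have h1 : ((List.range m).reverse.map
            (fun i => b (i+1) ^ ((-1:ℤ)^(i+1)))).prod =
            (((List.range m).map (fun i => b (i+1) ^ ((-1:ℤ)^i))).prod)⁻¹ := by
          apply inv_injective
          rw [inv_inv, rev_prod_inv]
          simp [hneg]
        have h2 : ((List.range (m+1)).map
            (fun i => b (i+1) ^ ((-1:ℤ)^(i+1)))).prod =
            (((List.range (m+1)).reverse.map
              (fun i => b (i+1) ^ ((-1:ℤ)^i))).prod)⁻¹ := by
          rw [rev_prod_inv]
          simp [hneg']
        rw [peel_top (fun i => b (i+1) ^ ((-1:ℤ)^(i+1))) (m+1),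
          peel_top (fun i => b (i+1) ^ ((-1:ℤ)^(i+1))) m]
        have hmm : ((-1:ℤ))^(m+1+1) = 1 := by
          rw [pow_succ, hOn.neg_one_pow]; ring
        rw [hmm, hOn.neg_one_pow, zpow_one, zpow_neg_one, h1, h2]
        simp [map_mul, map_inv, hff, mul_assoc]
end

section
/- Let (L, *) be an LD-system, p, q ∈ ℕ, a₁, …, a_p ∈ L, b₁, …, b_q ∈ L, and a₀ ∈ L. Write α(y) = a_p * (a_{p−1} * ( ⋯ * (a₁ * y) ⋯ )) and β(y) = b_q * (b_{q−1} * ( ⋯ * (b₁ * y) ⋯ )). Then α(β(a₀)) = α(b_q) * (α(b_{q−1}) * ( ⋯ * (α(b₂) * (α(b₁) * α(a₀))) ⋯ )); that is, in Protocol 1 Alice's key K_A = α(β(a₀)) equals Bob's key K_B computed by iterated left multiplication by the elements α(b_j) applied to p₀ = α(a₀). -/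
section
variable {L : Type*} (op : L → L → L)

private def F (l : List L) (z : L) : L := l.foldl (fun acc x => op x acc) z

private lemma F_cons (c : L) (l : List L) (z : L) : F op (c :: l) z = F op l (op c z) := rfl

private lemma F_op (hLD : ∀ x y z : L, op x (op y z) = op (op x y) (op x z)) :
    ∀ (l : List L) (x y : L), F op l (op x y) = op (F op l x) (F op l y) := by
  intro l
  induction l with
  | nil => intro x y; rfl
  | cons c l ih =>
    intro x y
    rw [F_cons, hLD, ih, F_cons, F_cons]

private lemma F_F (hLD : ∀ x y z : L, op x (op y z) = op (op x y) (op x z)) (l : List L) :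
    ∀ (m : List L) (z : L), F op l (F op m z) = F op (m.map (F op l)) (F op l z) := by
  intro m
  induction m with
  | nil => intro z; rfl
  | cons c m ih =>
    intro z
    rw [F_cons, ih, F_op op hLD, List.map_cons, F_cons]
end

/-- Correctness of Protocol 1: in an LD-system `(L, *)`, with
`α(y) = a_p * ( ⋯ (a₁ * y) ⋯ )` and `β(y) = b_q * ( ⋯ (b₁ * y) ⋯ )`, Alice's
key `α(β(a₀))` equals Bob's key computed by iterated left multiplication by
the `α(b_j)` applied to `p₀ = α(a₀)`. -/
theorem protocol1_shared_key {L : Type*} (op : L → L → L)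
    (hLD : ∀ x y z : L, op x (op y z) = op (op x y) (op x z))
    (p q : ℕ) (a : Fin p → L) (b : Fin q → L) (a₀ : L) :
    (List.finRange p).foldl (fun acc i => op (a i) acc)
        ((List.finRange q).foldl (fun acc j => op (b j) acc) a₀) =
    (List.finRange q).foldl
        (fun acc j => op ((List.finRange p).foldl (fun acc' i => op (a i) acc') (b j)) acc)
        ((List.finRange p).foldl (fun acc i => op (a i) acc) a₀) := by
  have h1 : ∀ z : L, (List.finRange p).foldl (fun acc i => op (a i) acc) z
      = F op ((List.finRange p).map a) z := by
    intro z; rw [F, List.foldl_map]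
  have h2 : ∀ z : L, (List.finRange q).foldl (fun acc j => op (b j) acc) z
      = F op ((List.finRange q).map b) z := by
    intro z; rw [F, List.foldl_map]
  rw [h1, h2, F_F op hLD, List.map_map]
  simp only [F, List.foldl_map, Function.comp]
end

section
/- Let G be a group and f : G → G a group endomorphism. Define x *_f y = f(x⁻¹ · y) · x on G. Then for k ≥ 1 and b₁, …, b_k, s ∈ G, setting b̃ = f^{k−1}(b₁) · f^{k−2}(b₂) ⋯ f(b_{k−1}) · b_k (where f^j denotes the j-fold composition of f), the iterated product satisfies b_k *_f (b_{k−1} *_f ( ⋯ *_f (b₂ *_f (b₁ *_f s)) ⋯ )) = f(b̃⁻¹) · f^k(s) · b̃. -/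
/-- Explicit form of iterated `f`-conjugacy: with
`b̃ = f^{k−1}(b₁) f^{k−2}(b₂) ⋯ f(b_{k−1}) b_k`, the iterated product
`b_k *_f ( ⋯ *_f (b₁ *_f s) ⋯ )` equals `f(b̃⁻¹) f^k(s) b̃`. -/
theorem iterated_f_conjugacy_formula {G : Type*} [Group G] (f : G →* G)
    (k : ℕ) (hk : 1 ≤ k) (b : ℕ → G) (s : G) :
    (List.range k).foldl (fun acc i => f ((b (i + 1))⁻¹ * acc) * b (i + 1)) s =
    f (((List.range k).map (fun i => (⇑f)^[k - 1 - i] (b (i + 1)))).prod)⁻¹ *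
      (⇑f)^[k] s *
      ((List.range k).map (fun i => (⇑f)^[k - 1 - i] (b (i + 1)))).prod := by
  induction k, hk using Nat.le_induction with
  | base =>
    simp [List.range_succ, map_mul, mul_assoc]
  | succ k hk ih =>
    have hmap : (List.range k).map (fun i => (⇑f)^[k + 1 - 1 - i] (b (i + 1))) =
        List.map (⇑f) ((List.range k).map fun i => (⇑f)^[k - 1 - i] (b (i + 1))) := by
      rw [List.map_map]
      apply List.map_congr_left
      intro i hi
      simp only [List.mem_range] at hi
      have h1 : k + 1 - 1 - i = (k - 1 - i) + 1 := by omega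
      rw [h1, Function.iterate_succ_apply']
      rfl
    rw [List.range_succ, List.foldl_append, List.foldl_cons, List.foldl_nil, ih,
      List.map_append, List.map_cons, List.map_nil, List.prod_append, hmap,
      List.prod_cons, List.prod_nil]
    have h2 : k + 1 - 1 - k = 0 := by omega
    rw [h2]
    simp only [Function.iterate_zero, id_eq, mul_one]
    rw [← map_list_prod]
    simp [map_mul, mul_assoc, Function.iterate_succ_apply']
end
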